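/- arXiv:2104.09618 — 5 statements merged into one kernel-verified Lean document; each statement's English description precedes it below -/
import Mathlib

section
/- Let H be a symmetric positive semi-definite d×d real matrix whose largest eigenvalue λ₁ > 0 is simple, and let q ∈ ℝ^d be a unit eigenvector with Hq = λ₁q. Let v : [0,∞) → ℝ^d be differentiable with ‖v(t)‖ = 1 for all t ≥ 0 and satisfy the Oja PCA flow v̇(t) = (I − v(t)v(t)ᵀ)Hv(t). If 0 < ⟨q, v(0)⟩ ≤ 1, then v(t) → q as t → ∞. -/
open Matrix Filter
open scoped InnerProductSpace

/-- Right-hand side of the Oja PCA flow `v̇ = (I - v vᵀ) M v` on `ℝ^d`. -/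
noncomputable def ojaRHS {d : ℕ} (M : Matrix (Fin d) (Fin d) ℝ)
    (x : EuclideanSpace ℝ (Fin d)) : EuclideanSpace ℝ (Fin d) :=
  WithLp.toLp 2 (((1 - Matrix.vecMulVec x x) * M) *ᵥ x)

open Topology Set

/-!
Put `a t = ⟪q, v t⟫`. The flow gives `a' = (λ₁ - ⟪v, H v⟫) a`, and since `λ₁` is a simple top
eigenvalue, the spectral theorem yields a gap `δ > 0` with `λ₁ - ⟪x, H x⟫ ≥ δ (1 - ⟪q, x⟫²)` on
the unit sphere. So `a²` is nondecreasing and `a` stays above `a 0 > 0`; then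
`(1 - a)' ≤ -δ a(0) (1 - a)`, so `1 - a` decays exponentially, and `‖v - q‖² = 2 - 2 a → 0`.
-/

section Gap

variable {E : Type*} [NormedAddCommGroup E] [InnerProductSpace ℝ E] [FiniteDimensional ℝ E]
  {T : E →ₗ[ℝ] E} {lam : ℝ} {q : E}

theorem LinearMap.IsSymmetric.exists_lt_inner_apply_le_of_inner_eq_zero (hT : T.IsSymmetric)
    (hmax : ∀ (μ : ℝ) (w : E), w ≠ 0 → T w = μ • w → μ ≤ lam)
    (hsimple : ∀ w : E, T w = lam • w → ∃ c : ℝ, w = c • q) :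
    ∃ lam₂ < lam, ∀ w : E, ⟪q, w⟫_ℝ = 0 → ⟪w, T w⟫_ℝ ≤ lam₂ * ‖w‖ ^ 2 := by
  set b := hT.eigenvectorBasis rfl
  set μ := hT.eigenvalues rfl
  have hTb : ∀ i, T (b i) = μ i • b i := hT.apply_eigenvectorBasis rfl
  obtain ⟨lam₂, hlt, hle⟩ : ∃ lam₂ < lam, ∀ i, μ i ≠ lam → μ i ≤ lam₂ := by
    have : ∀ᶠ l in 𝓝[<] lam, ∀ i, μ i ≠ lam → μ i ≤ l := by
      refine eventually_all.2 fun i => ?_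
      by_cases hi : μ i = lam
      · exact .of_forall fun _ h => (h hi).elim
      have hlt : μ i < lam := (hmax _ _ (b.orthonormal.ne_zero i) (hTb i)).lt_of_ne hi
      exact ((eventually_gt_nhds hlt).filter_mono nhdsWithin_le_nhds).mono fun _ h _ => h.le
    exact (this.and self_mem_nhdsWithin).exists.imp fun l h => ⟨h.2, h.1⟩
  refine ⟨lam₂, hlt, fun w hw => ?_⟩
  have hcoef : ∀ i, μ i * ⟪b i, w⟫_ℝ ^ 2 ≤ lam₂ * ⟪b i, w⟫_ℝ ^ 2 := by
    intro i
    by_cases hi : μ i = lam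
    · obtain ⟨c, hc⟩ := hsimple (b i) (hi ▸ hTb i)
      simp [hc, real_inner_smul_left, hw]
    · exact mul_le_mul_of_nonneg_right (hle i hi) (sq_nonneg _)
  calc ⟪w, T w⟫_ℝ = ∑ i, μ i * ⟪b i, w⟫_ℝ ^ 2 := by
        rw [← b.sum_inner_mul_inner]
        refine Finset.sum_congr rfl fun i _ => ?_
        rw [← hT, hTb, real_inner_smul_left, real_inner_comm]
        ring
    _ ≤ ∑ i, lam₂ * ⟪b i, w⟫_ℝ ^ 2 := Finset.sum_le_sum fun i _ => hcoef i
    _ = lam₂ * ‖w‖ ^ 2 := by rw [← Finset.mul_sum, b.sum_sq_inner_right]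

theorem LinearMap.IsSymmetric.exists_pos_mul_le_sub_inner_apply (hT : T.IsSymmetric)
    (hq : ‖q‖ = 1) (heig : T q = lam • q)
    (hmax : ∀ (μ : ℝ) (w : E), w ≠ 0 → T w = μ • w → μ ≤ lam)
    (hsimple : ∀ w : E, T w = lam • w → ∃ c : ℝ, w = c • q) :
    ∃ δ > 0, ∀ x : E, δ * (‖x‖ ^ 2 - ⟪q, x⟫_ℝ ^ 2) ≤ lam * ‖x‖ ^ 2 - ⟪x, T x⟫_ℝ := by
  obtain ⟨lam₂, hlt, hbound⟩ := hT.exists_lt_inner_apply_le_of_inner_eq_zero hmax hsimple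
  refine ⟨lam - lam₂, sub_pos.2 hlt, fun x => ?_⟩
  set a := ⟪q, x⟫_ℝ
  set w := x - a • q
  have hqq : ⟪q, q⟫_ℝ = 1 := by rw [real_inner_self_eq_norm_sq, hq, one_pow]
  have hqw : ⟪q, w⟫_ℝ = 0 := by simp [w, a, inner_sub_right, real_inner_smul_right, hq]
  have hwq : ⟪w, q⟫_ℝ = 0 := by rw [real_inner_comm, hqw]
  have hx : x = a • q + w := by simp [w]
  have hnorm : ‖x‖ ^ 2 = a ^ 2 + ‖w‖ ^ 2 := by
    rw [hx, norm_add_sq_real, norm_smul, hq, real_inner_smul_left, hqw]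
    simp
  have hrayleigh : ⟪x, T x⟫_ℝ = lam * a ^ 2 + ⟪w, T w⟫_ℝ := by
    rw [hx, map_add, map_smul, heig]
    simp only [inner_add_left, inner_add_right, real_inner_smul_left, real_inner_smul_right,
      hqq, ← hT q w, heig, hqw, hwq]
    ring
  rw [hnorm, hrayleigh]
  linarith [hbound w hqw]

end Gap

section ScalarODE

variable {a r : ℝ → ℝ}

theorem le_mul_exp_of_hasDerivAt_le {g g' : ℝ → ℝ} {c : ℝ}
    (hg : ∀ t, 0 ≤ t → HasDerivAt g (g' t) t) (hle : ∀ t, 0 ≤ t → g' t ≤ -c * g t)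
    {t : ℝ} (ht : 0 ≤ t) : g t ≤ g 0 * Real.exp (-(c * t)) := by
  have hderiv : ∀ s, 0 ≤ s → HasDerivAt (fun s => g s * Real.exp (c * s))
      ((g' s + c * g s) * Real.exp (c * s)) s := fun s hs => by
    have hexp : HasDerivAt (fun s => Real.exp (c * s)) (Real.exp (c * s) * c) s := by
      simpa using ((hasDerivAt_id s).const_mul c).exp
    exact ((hg s hs).mul hexp).congr_deriv (by ring)
  have hanti : AntitoneOn (fun s => g s * Real.exp (c * s)) (Ici 0) := by
    refine antitoneOn_of_hasDerivWithinAt_nonpos (convex_Ici 0)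
      (fun s hs => (hderiv s hs).continuousAt.continuousWithinAt)
      (fun s hs => (hderiv s (interior_subset hs)).hasDerivWithinAt) fun s hs => ?_
    have := hle s (interior_subset hs)
    exact mul_nonpos_of_nonpos_of_nonneg (by linarith) (Real.exp_pos _).le
  have := hanti self_mem_Ici ht ht
  simp only [mul_zero, Real.exp_zero, mul_one] at this
  rwa [Real.exp_neg, ← div_eq_mul_inv, le_div_iff₀ (Real.exp_pos _)]

theorem apply_zero_le_of_hasDerivAt_mul (ha : ∀ t, 0 ≤ t → HasDerivAt a (r t * a t) t)
    (hr : ∀ t, 0 ≤ t → 0 ≤ r t) (h0 : 0 < a 0) {t : ℝ} (ht : 0 ≤ t) : a 0 ≤ a t := by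
  have hcont : ContinuousOn a (Ici 0) := fun s hs => (ha s hs).continuousAt.continuousWithinAt
  have hsq : MonotoneOn (fun s => a s ^ 2) (Ici 0) := by
    refine monotoneOn_of_hasDerivWithinAt_nonneg (f' := fun s => 2 * r s * a s ^ 2)
      (convex_Ici 0) (hcont.pow 2) (fun s hs => ?_)
      fun s hs => mul_nonneg (mul_nonneg zero_le_two (hr s (interior_subset hs))) (sq_nonneg _)
    exact (((ha s (interior_subset hs)).pow 2).congr_deriv (by ring)).hasDerivWithinAt
  have hne : ∀ s, 0 ≤ s → a s ≠ 0 := fun s hs hzero => by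
    have := hsq self_mem_Ici hs hs
    simp only [hzero] at this
    nlinarith
  have hpos : 0 < a t := by
    by_contra! hneg
    obtain ⟨s, hs, hzero⟩ := intermediate_value_Icc' ht (hcont.mono Icc_subset_Ici_self)
      ⟨hneg, h0.le⟩
    exact hne s hs.1 hzero
  exact (pow_le_pow_iff_left₀ h0.le hpos.le two_ne_zero).1 (hsq self_mem_Ici ht ht)

theorem tendsto_one_of_hasDerivAt_mul {δ : ℝ} (hδ : 0 < δ)
    (ha : ∀ t, 0 ≤ t → HasDerivAt a (r t * a t) t)
    (hr : ∀ t, 0 ≤ t → δ * (1 - a t ^ 2) ≤ r t) (habs : ∀ t, 0 ≤ t → |a t| ≤ 1)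
    (h0 : 0 < a 0) : Tendsto a atTop (𝓝 1) := by
  have hr0 : ∀ t, 0 ≤ t → 0 ≤ r t := fun t ht => by
    have : a t ^ 2 ≤ 1 := by simpa using pow_le_pow_left₀ (abs_nonneg _) (habs t ht) 2
    nlinarith [hr t ht]
  have hmono := fun t ht => apply_zero_le_of_hasDerivAt_mul ha hr0 h0 (t := t) ht
  -- `1 - a` decays like `exp (-δ a₀ t)` because `r a ≥ δ (1 - a) (1 + a) a ≥ δ a₀ (1 - a)`
  have hdecay : ∀ t, 0 ≤ t → 1 - a t ≤ (1 - a 0) * Real.exp (-(δ * a 0 * t)) := by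
    refine fun t ht => le_mul_exp_of_hasDerivAt_le (g' := fun t => -(r t * a t))
      (fun s hs => (ha s hs).const_sub 1) (fun s hs => ?_) ht
    have h1 := (abs_le.1 (habs s hs)).2
    have h2 := hmono s hs
    have h3 : 0 ≤ δ * (1 - a s) * (a s - a 0 + a s ^ 2) :=
      mul_nonneg (mul_nonneg hδ.le (sub_nonneg.2 h1)) (by nlinarith)
    nlinarith [mul_le_mul_of_nonneg_right (hr s hs) (h0.le.trans h2)]
  have hexp : Tendsto (fun t => (1 - a 0) * Real.exp (-(δ * a 0 * t))) atTop (𝓝 0) := by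
    simpa using (Real.tendsto_exp_atBot.comp (tendsto_neg_atTop_atBot.comp
      (tendsto_id.const_mul_atTop (mul_pos hδ h0)))).const_mul (1 - a 0)
  have hsub : Tendsto (fun t => 1 - a t) atTop (𝓝 0) :=
    squeeze_zero' ((eventually_ge_atTop 0).mono fun t ht => sub_nonneg.2 (abs_le.1 (habs t ht)).2)
      ((eventually_ge_atTop 0).mono hdecay) hexp
  simpa using hsub.const_sub 1

end ScalarODE

theorem tendsto_of_inner_tendsto_one {E α : Type*} [NormedAddCommGroup E] [InnerProductSpace ℝ E]
    {l : Filter α} {v : α → E} {q : E} (hq : ‖q‖ = 1) (hv : ∀ᶠ t in l, ‖v t‖ = 1)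
    (h : Tendsto (fun t => ⟪q, v t⟫_ℝ) l (𝓝 1)) : Tendsto v l (𝓝 q) := by
  have hsq : Tendsto (fun t => ‖v t - q‖ ^ 2) l (𝓝 0) := by
    have : Tendsto (fun t => 2 - 2 * ⟪q, v t⟫_ℝ) l (𝓝 0) := by
      simpa using (h.const_mul 2).const_sub 2
    refine this.congr' (hv.mono fun t ht => ?_)
    show 2 - 2 * ⟪q, v t⟫_ℝ = ‖v t - q‖ ^ 2
    rw [norm_sub_sq_real, ht, hq, real_inner_comm]
    ring
  rw [tendsto_iff_norm_sub_tendsto_zero]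
  simpa using hsq.sqrt

theorem ojaRHS_eq_sub_smul {d : ℕ} (M : Matrix (Fin d) (Fin d) ℝ) (x : EuclideanSpace ℝ (Fin d)) :
    ojaRHS M x = toEuclideanLin M x - ⟪x, toEuclideanLin M x⟫_ℝ • x := by
  ext i
  simp [ojaRHS, Matrix.sub_mul, Matrix.sub_mulVec, ← Matrix.mulVec_mulVec, vecMulVec_mulVec,
    EuclideanSpace.inner_eq_star_dotProduct, toLpLin_apply, dotProduct_comm]

theorem inner_ojaRHS_of_eigenvector {d : ℕ} {H : Matrix (Fin d) (Fin d) ℝ} (hH : H.IsHermitian)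
    {q : EuclideanSpace ℝ (Fin d)} {lam : ℝ} (heig : toEuclideanLin H q = lam • q)
    (x : EuclideanSpace ℝ (Fin d)) :
    ⟪q, ojaRHS H x⟫_ℝ = (lam - ⟪x, toEuclideanLin H x⟫_ℝ) * ⟪q, x⟫_ℝ := by
  rw [ojaRHS_eq_sub_smul, inner_sub_right, real_inner_smul_right,
    ← isSymmetric_toEuclideanLin_iff.2 hH q x, heig, real_inner_smul_left]
  ring

theorem toEuclideanLin_apply_eq_smul_iff {n : Type*} [Fintype n] [DecidableEq n]
    (M : Matrix n n ℝ) (w : EuclideanSpace ℝ n) (μ : ℝ) :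
    toEuclideanLin M w = μ • w ↔ M *ᵥ w = μ • w :=
  (WithLp.ofLp_injective 2).eq_iff.symm

theorem stmt0_general {d : ℕ} (H : Matrix (Fin d) (Fin d) ℝ) (hH : H.PosSemidef)
    (lam1 : ℝ)
    (q : EuclideanSpace ℝ (Fin d)) (hq : ‖q‖ = 1)
    (heig : H *ᵥ q = lam1 • q)
    (hmax : ∀ (μ : ℝ) (w : EuclideanSpace ℝ (Fin d)), w ≠ 0 → H *ᵥ w = μ • w → μ ≤ lam1)
    (hsimple : ∀ w : EuclideanSpace ℝ (Fin d), H *ᵥ w = lam1 • w → ∃ c : ℝ, w = c • q)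
    (v : ℝ → EuclideanSpace ℝ (Fin d))
    (hnorm : ∀ t : ℝ, 0 ≤ t → ‖v t‖ = 1)
    (hode : ∀ t : ℝ, 0 ≤ t → HasDerivAt v (ojaRHS H (v t)) t)
    (h0pos : 0 < ⟪q, v 0⟫_ℝ) :
    Tendsto v atTop (nhds q) := by
  set T := toEuclideanLin H
  have hT : T.IsSymmetric := isSymmetric_toEuclideanLin_iff.2 hH.isHermitian
  have heigT : T q = lam1 • q := (toEuclideanLin_apply_eq_smul_iff H q lam1).2 heig
  obtain ⟨δ, hδ, hgap⟩ := hT.exists_pos_mul_le_sub_inner_apply hq heigT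
    (fun μ w hw h => hmax μ w hw ((toEuclideanLin_apply_eq_smul_iff H w μ).1 h))
    (fun w h => hsimple w ((toEuclideanLin_apply_eq_smul_iff H w lam1).1 h))
  have hderiv : ∀ t, 0 ≤ t → HasDerivAt (fun t => ⟪q, v t⟫_ℝ)
      ((lam1 - ⟪v t, T (v t)⟫_ℝ) * ⟪q, v t⟫_ℝ) t := fun t ht => by
    simpa [inner_ojaRHS_of_eigenvector hH.isHermitian heigT] using
      (hasDerivAt_const t q).inner ℝ (hode t ht)
  refine tendsto_of_inner_tendsto_one hq ((eventually_ge_atTop 0).mono hnorm) ?_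
  refine tendsto_one_of_hasDerivAt_mul hδ hderiv (fun t ht => ?_) (fun t ht => ?_) h0pos
  · simpa [hnorm t ht] using hgap (v t)
  · simpa [hq, hnorm t ht] using abs_real_inner_le_norm q (v t)

/-- If `H` is symmetric positive semi-definite with simple largest eigenvalue
`λ₁ > 0` and unit eigenvector `q`, any unit-norm solution of the Oja PCA flow
with `0 < ⟨q, v(0)⟩ ≤ 1` converges to `q`. -/
theorem stmt0 {d : ℕ} (H : Matrix (Fin d) (Fin d) ℝ) (hH : H.PosSemidef)
    (lam1 : ℝ) (hlam1 : 0 < lam1)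
    (q : EuclideanSpace ℝ (Fin d)) (hq : ‖q‖ = 1)
    (heig : H *ᵥ q = lam1 • q)
    (hmax : ∀ (μ : ℝ) (w : EuclideanSpace ℝ (Fin d)), w ≠ 0 → H *ᵥ w = μ • w → μ ≤ lam1)
    (hsimple : ∀ w : EuclideanSpace ℝ (Fin d), H *ᵥ w = lam1 • w → ∃ c : ℝ, w = c • q)
    (v : ℝ → EuclideanSpace ℝ (Fin d))
    (hnorm : ∀ t : ℝ, 0 ≤ t → ‖v t‖ = 1)
    (hode : ∀ t : ℝ, 0 ≤ t → HasDerivAt v (ojaRHS H (v t)) t)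
    (h0pos : 0 < ⟪q, v 0⟫_ℝ) (h0le : ⟪q, v 0⟫_ℝ ≤ 1) :
    Tendsto v atTop (nhds q) :=
  stmt0_general H hH lam1 q hq heig hmax hsimple v hnorm hode h0pos
end

section
/- Let v₁,…,v_N ∈ ℝ^d be unit vectors with N ≥ 2 and v₂ = ⋯ = v_N = w, and let C = ∑_{k=1}^N (v_k − v̄)(v_k − v̄)ᵀ with v̄ = (1/N)∑ v_k. Define the Lyapunov function V = (1/2)∑_{i=1}^{N−1} ‖vᵢ − v_N‖², and let each state move with velocity v̇ᵢ = (I − vᵢvᵢᵀ)C vᵢ. Then the derivative of V along these velocities, namely ∑_{i=1}^{N−1} ⟨vᵢ − v_N, v̇ᵢ − v̇_N⟩, equals ((2N−2)/N)·(1 − ⟨v₁, w⟩)²·(1 + ⟨v₁, w⟩); in particular it is strictly positive whenever v₁ ≠ ±w. -/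
/-!
Since every agent but the first sits at `w`, each deviation `v_k - v̄` is a multiple of
`p = v₁ - w`, and the covariance matrix is the rank-one matrix `((N - 1) / N) p pᵀ`; only the
first term of the Lyapunov derivative survives. For `C = c p pᵀ` the Oja velocity at a point `x`
is `c ⟨p, x⟩ (p - ⟨x, p⟩ x)`, and expanding `⟨p, v̇₁ - v̇_N⟩` with `s = ⟨v₁, w⟩` gives
`2 c (1 - s)² (1 + s)`, which is positive for unit vectors with `-1 < s < 1`.
-/

open Matrix Filter Finset
open scoped InnerProductSpace

section

variable {d : ℕ}

lemma ojaRHS_smul_vecMulVec (c : ℝ) (p x : EuclideanSpace ℝ (Fin d)) :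
    ojaRHS (c • vecMulVec p p) x = (c * ⟪p, x⟫_ℝ) • (p - ⟪x, p⟫_ℝ • x) := by
  ext i
  simp only [ojaRHS, sub_mul, one_mul, sub_mulVec, ← mulVec_mulVec, smul_mulVec,
    vecMulVec_mulVec, op_smul_eq_smul, smul_eq_mul, EuclideanSpace.inner_eq_star_dotProduct,
    star_trivial, dotProduct_smul, dotProduct_comm, Pi.sub_apply, Pi.smul_apply,
    PiLp.smul_apply, PiLp.sub_apply]
  ring

lemma inner_sub_ojaRHS_sub_of_rankOne (c : ℝ) {u w : EuclideanSpace ℝ (Fin d)}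
    (hu : ‖u‖ = 1) (hw : ‖w‖ = 1) :
    ⟪u - w, ojaRHS (c • vecMulVec (u - w) (u - w)) u
        - ojaRHS (c • vecMulVec (u - w) (u - w)) w⟫_ℝ
      = 2 * c * (1 - ⟪u, w⟫_ℝ) ^ 2 * (1 + ⟪u, w⟫_ℝ) := by
  have huu : ⟪u, u⟫_ℝ = 1 := inner_self_eq_one_of_norm_eq_one hu
  have hww : ⟪w, w⟫_ℝ = 1 := inner_self_eq_one_of_norm_eq_one hw
  simp only [ojaRHS_smul_vecMulVec, inner_sub_left, inner_sub_right, inner_smul_right,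
    real_inner_comm w u, huu, hww]
  ring

variable {ι : Type*} [Fintype ι] [DecidableEq ι]

lemma sum_sq_indicator_sub_inv_card (i₀ : ι) :
    ∑ k : ι, ((if k = i₀ then 1 else 0) - (Fintype.card ι : ℝ)⁻¹) ^ 2
      = ((Fintype.card ι : ℝ) - 1) / Fintype.card ι := by
  set n : ℝ := (Fintype.card ι : ℝ)
  have hn : n ≠ 0 := Nat.cast_ne_zero.2 (Fintype.card_pos_iff.2 ⟨i₀⟩).ne'
  have hterm : ∀ k, ((if k = i₀ then 1 else 0) - n⁻¹) ^ 2
      = (if k = i₀ then 1 - 2 * n⁻¹ else 0) + n⁻¹ ^ 2 := by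
    intro k
    split_ifs <;> ring
  simp only [hterm, Finset.sum_add_distrib, Finset.sum_ite_eq', Finset.mem_univ, if_true,
    Finset.sum_const, Finset.card_univ, nsmul_eq_mul]
  field_simp
  ring

lemma covariance_eq_of_eq_off (v : ι → EuclideanSpace ℝ (Fin d)) (i₀ : ι)
    (w : EuclideanSpace ℝ (Fin d)) (hw : ∀ k, k ≠ i₀ → v k = w) :
    ∑ k, vecMulVec (v k - (Fintype.card ι : ℝ)⁻¹ • ∑ j, v j)
        (v k - (Fintype.card ι : ℝ)⁻¹ • ∑ j, v j)
      = (((Fintype.card ι : ℝ) - 1) / Fintype.card ι) • vecMulVec (v i₀ - w) (v i₀ - w) := by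
  set n : ℝ := (Fintype.card ι : ℝ)
  have hn : n ≠ 0 := Nat.cast_ne_zero.2 (Fintype.card_pos_iff.2 ⟨i₀⟩).ne'
  set δ : ι → ℝ := fun k ↦ if k = i₀ then 1 else 0
  have hv : ∀ k, v k = w + δ k • (v i₀ - w) := by
    intro k
    by_cases hk : k = i₀
    · simp [δ, hk]
    · simp [δ, hk, hw k hk]
  have hdev : ∀ k, v k - n⁻¹ • ∑ j, v j = (δ k - n⁻¹) • (v i₀ - w) := by
    have hsum : ∑ j, v j = n • w + (v i₀ - w) := by
      rw [Finset.sum_congr rfl fun k _ ↦ hv k, Finset.sum_add_distrib, ← Finset.sum_smul]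
      simp [δ, n, Nat.cast_smul_eq_nsmul]
    intro k
    rw [hsum, hv k, smul_add, smul_smul, inv_mul_cancel₀ hn, one_smul, sub_smul]
    abel
  simp only [hdev, WithLp.ofLp_smul, smul_vecMulVec, vecMulVec_smul, smul_smul, ← Finset.sum_smul,
    ← sq]
  rw [sum_sq_indicator_sub_inv_card]

end

lemma sq_one_sub_inner_mul_one_add_inner_pos {F : Type*} [NormedAddCommGroup F]
    [InnerProductSpace ℝ F] {u w : F} (hu : ‖u‖ = 1) (hw : ‖w‖ = 1) (hne : u ≠ w)
    (hne_neg : u ≠ -w) : 0 < (1 - ⟪u, w⟫_ℝ) ^ 2 * (1 + ⟪u, w⟫_ℝ) := by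
  have hlt : ⟪u, w⟫_ℝ < 1 := (inner_lt_one_iff_real_of_norm_eq_one hu hw).2 hne
  have hgt : -1 < ⟪u, w⟫_ℝ := (neg_one_le_real_inner_of_norm_eq_one hu hw).lt_of_ne
    fun h ↦ hne_neg ((inner_eq_neg_one_iff_of_norm_eq_one hu hw).1 h.symm)
  exact mul_pos (pow_pos (sub_pos.2 hlt) 2) (by linarith)

/-- For unit vectors `v₁, …, v_N` with `v₂ = ⋯ = v_N = w`, the derivative of
the Lyapunov function `V = (1/2)∑_{i<N} ‖vᵢ - v_N‖²` along the PCA velocities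
`v̇ᵢ = (I - vᵢvᵢᵀ) C vᵢ` equals `((2N-2)/N)(1 - ⟨v₁, w⟩)²(1 + ⟨v₁, w⟩)`, which
is strictly positive whenever `v₁ ≠ ±w`. -/
theorem stmt8 {d N : ℕ} (hN : 2 ≤ N) (v : Fin N → EuclideanSpace ℝ (Fin d))
    (hunit : ∀ k : Fin N, ‖v k‖ = 1) (w : EuclideanSpace ℝ (Fin d))
    (hw : ∀ k : Fin N, k ≠ ⟨0, by omega⟩ → v k = w)
    (vbar : EuclideanSpace ℝ (Fin d)) (hvbar : vbar = (N : ℝ)⁻¹ • ∑ k, v k)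
    (C : Matrix (Fin d) (Fin d) ℝ)
    (hC : C = ∑ k, Matrix.vecMulVec (v k - vbar) (v k - vbar))
    (vel : Fin N → EuclideanSpace ℝ (Fin d))
    (hvel : ∀ k : Fin N, vel k = ojaRHS C (v k)) :
    (∑ k ∈ Finset.univ.erase (⟨N - 1, by omega⟩ : Fin N),
        ⟪v k - v ⟨N - 1, by omega⟩, vel k - vel ⟨N - 1, by omega⟩⟫_ℝ)
      = ((2 * (N : ℝ) - 2) / N) * (1 - ⟪v ⟨0, by omega⟩, w⟫_ℝ) ^ 2
          * (1 + ⟪v ⟨0, by omega⟩, w⟫_ℝ) ∧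
    (v ⟨0, by omega⟩ ≠ w ∧ v ⟨0, by omega⟩ ≠ -w →
      0 < ((2 * (N : ℝ) - 2) / N) * (1 - ⟪v ⟨0, by omega⟩, w⟫_ℝ) ^ 2
            * (1 + ⟪v ⟨0, by omega⟩, w⟫_ℝ)) := by
  set i₀ : Fin N := ⟨0, by omega⟩
  set iL : Fin N := ⟨N - 1, by omega⟩
  have hne : i₀ ≠ iL := by simp only [i₀, iL, ne_eq, Fin.mk.injEq]; omega
  have hwL : v iL = w := hw iL hne.symm
  have hw_unit : ‖w‖ = 1 := hwL ▸ hunit iL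
  have hC' : C = (((N : ℝ) - 1) / N) • vecMulVec (v i₀ - w) (v i₀ - w) := by
    simpa [hC, hvbar] using covariance_eq_of_eq_off v i₀ w hw
  refine ⟨?_, fun ⟨hne_w, hne_neg⟩ ↦ ?_⟩
  · rw [Finset.sum_eq_single_of_mem i₀ (mem_erase.2 ⟨hne, mem_univ _⟩)
      fun k _ hk ↦ by rw [hw k hk, hwL, sub_self, inner_zero_left],
      hvel, hvel, hwL, hC', inner_sub_ojaRHS_sub_of_rankOne _ (hunit i₀) hw_unit]
    field_simp
  · have hN' : (2 : ℝ) ≤ N := by exact_mod_cast hN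
    rw [mul_assoc]
    exact mul_pos (div_pos (by linarith) (by linarith))
      (sq_one_sub_inner_mul_one_add_inner_pos (hunit i₀) hw_unit hne_w hne_neg)
end

section
/- Let s ∈ ℝ^d be a unit vector, let {1,…,N} be partitioned into nonempty disjoint sets 𝒱₁ and 𝒱₂, set vᵢ = s for i ∈ 𝒱₁ and vⱼ = −s for j ∈ 𝒱₂, and let p = |𝒱₁| − |𝒱₂|. Evaluate the linearization matrix A_k = C + ⟨v_k − v̄, v_k⟩ I − (v_k − v̄)v_kᵀ − ⟨v_k, Cv_k⟩ I − 2v_kv_kᵀC + 2v_kv_kᵀ(v_k − v̄)v_kᵀ at this dissensus configuration, where v̄ = (p/N)s and C = ((N² − p²)/N)ssᵀ. Then A_i = −m_i(ssᵀ + I) with m_i = (N² − p²)/N − (1 − p/N) for every i ∈ 𝒱₁, and A_j = −m_j(ssᵀ + I) with m_j = (N² − p²)/N − (1 + p/N) for every j ∈ 𝒱₂; moreover m_k > 0 for every k, so A_k is negative definite for every agent k. Hence the linearized PCA opinion dynamics is asymptotically stable at the dissensus equilibrium. -/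
/-!
At a dissensus configuration every agent sits at `ε • s` with `ε = ±1`, while `v̄` and `C` are
multiples of `s` and of the projection `ssᵀ`. Since `(ssᵀ)² = ssᵀ` and `ε² = 1`, the linearization
collapses to a combination of `ssᵀ` and `I` whose two coefficients coincide, giving
`A_k = -m_k (ssᵀ + I)`. With `a = |𝒱₁|`, `b = |𝒱₂|` one finds `m_i = 2b(2a - 1)/N` and
`m_j = 2a(2b - 1)/N`, both positive, and `ssᵀ + I` is positive definite.
-/

open Matrix Finset

section Linearization

variable {n : Type*} [Fintype n]

theorem Matrix.PosDef.dotProduct_neg_smul_mulVec_neg {M : Matrix n n ℝ} (hM : M.PosDef)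
    {m : ℝ} (hm : 0 < m) {x : n → ℝ} (hx : x ≠ 0) : x ⬝ᵥ (((-m) • M) *ᵥ x) < 0 := by
  rw [smul_mulVec, dotProduct_smul, smul_eq_mul, neg_mul, neg_lt_zero]
  exact mul_pos hm (hM.dotProduct_mulVec_pos hx)

variable [DecidableEq n]

theorem Matrix.posDef_vecMulVec_self_add_one (s : n → ℝ) : (vecMulVec s s + 1).PosDef := by
  simpa using PosDef.posSemidef_add (posSemidef_vecMulVec_self_star s) PosDef.one

/-- The paper's `A_k`, with `w = v_k`. -/
def pcaLinearization (C : Matrix n n ℝ) (w vbar : n → ℝ) : Matrix n n ℝ :=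
  C + ((w - vbar) ⬝ᵥ w) • 1 - vecMulVec (w - vbar) w - (w ⬝ᵥ (C *ᵥ w)) • 1
    - 2 • (vecMulVec w w * C) + 2 • (vecMulVec w w * vecMulVec (w - vbar) w)

theorem pcaLinearization_smul_vecMulVec {s : n → ℝ} (hs : s ⬝ᵥ s = 1)
    {ε : ℝ} (hε : ε * ε = 1) (β c : ℝ) :
    pcaLinearization (c • vecMulVec s s) (ε • s) (β • s)
      = (1 - β * ε - c) • (vecMulVec s s + 1) := by
  have hεs : vecMulVec (ε • s) (ε • s) = vecMulVec s s := by
    rw [smul_vecMulVec, vecMulVec_smul, smul_smul, hε, one_smul]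
  have hP : vecMulVec s s * vecMulVec s s = vecMulVec s s := by
    rw [vecMulVec_mul_vecMulVec, hs, one_smul]
  rw [pcaLinearization, ← sub_smul, hεs]
  simp only [smul_dotProduct, dotProduct_smul, smul_mulVec, mulVec_smul, vecMulVec_mulVec,
    smul_vecMulVec, vecMulVec_smul, Matrix.mul_smul, hP, hs, smul_eq_mul, MulOpposite.op_one,
    one_smul, mul_one]
  linear_combination (norm := module) hε • ((1 - c) • (1 : Matrix n n ℝ) + vecMulVec s s)

end Linearization

theorem EuclideanSpace.dotProduct_self_eq_norm_sq {ι : Type*} [Fintype ι]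
    (x : EuclideanSpace ℝ ι) : (x : ι → ℝ) ⬝ᵥ x = ‖x‖ ^ 2 := by
  rw [← real_inner_self_eq_norm_sq, EuclideanSpace.inner_eq_star_dotProduct, star_trivial]

theorem dissensus_rate_pos {N p a b : ℝ} (ha : 1 ≤ a) (hb : 1 ≤ b) (hN : N = a + b)
    (hp : p = a - b) : 0 < (N ^ 2 - p ^ 2) / N - (1 - p / N) := by
  have hrate : (N ^ 2 - p ^ 2) / N - (1 - p / N) = 2 * b * (2 * a - 1) / (a + b) := by
    subst hN hp
    field_simp
    ring
  rw [hrate]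
  exact div_pos (by nlinarith) (by linarith)

/-- At the dissensus configuration (agents in `𝒱₁` at `s`, agents in `𝒱₂` at
`-s`, `p = |𝒱₁| - |𝒱₂|`, `v̄ = (p/N)s`, `C = ((N²-p²)/N)ssᵀ`), the
linearization matrix `A_k` of the PCA opinion dynamics equals
`-m_k (ssᵀ + I)` with `m_i = (N²-p²)/N - (1 - p/N)` for `i ∈ 𝒱₁` and
`m_j = (N²-p²)/N - (1 + p/N)` for `j ∈ 𝒱₂`; each `m_k > 0`, so every `A_k` is
negative definite and the linearized dynamics is asymptotically stable at the
dissensus equilibrium. -/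
theorem stmt12 {d N : ℕ} (s : EuclideanSpace ℝ (Fin d)) (hs : ‖s‖ = 1)
    (V1 V2 : Finset (Fin N)) (hne1 : V1.Nonempty) (hne2 : V2.Nonempty)
    (hdisj : Disjoint V1 V2) (hunion : V1 ∪ V2 = Finset.univ)
    (v : Fin N → EuclideanSpace ℝ (Fin d))
    (hv1 : ∀ i ∈ V1, v i = s) (hv2 : ∀ j ∈ V2, v j = -s)
    (p : ℝ) (hp : p = (V1.card : ℝ) - (V2.card : ℝ))
    (vbar : EuclideanSpace ℝ (Fin d)) (hvbar : vbar = (p / N) • s)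
    (C : Matrix (Fin d) (Fin d) ℝ)
    (hC : C = (((N : ℝ) ^ 2 - p ^ 2) / N) • Matrix.vecMulVec s s)
    (A : Fin N → Matrix (Fin d) (Fin d) ℝ)
    (hA : ∀ k : Fin N,
      A k = C + ((v k - vbar) ⬝ᵥ v k) • (1 : Matrix (Fin d) (Fin d) ℝ)
        - Matrix.vecMulVec (v k - vbar) (v k)
        - (v k ⬝ᵥ (C *ᵥ v k)) • (1 : Matrix (Fin d) (Fin d) ℝ)
        - 2 • (Matrix.vecMulVec (v k) (v k) * C)
        + 2 • (Matrix.vecMulVec (v k) (v k) * Matrix.vecMulVec (v k - vbar) (v k))) :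
    (∀ i ∈ V1,
      A i = (-(((N : ℝ) ^ 2 - p ^ 2) / N - (1 - p / N))) • (Matrix.vecMulVec s s + 1) ∧
      0 < ((N : ℝ) ^ 2 - p ^ 2) / N - (1 - p / N)) ∧
    (∀ j ∈ V2,
      A j = (-(((N : ℝ) ^ 2 - p ^ 2) / N - (1 + p / N))) • (Matrix.vecMulVec s s + 1) ∧
      0 < ((N : ℝ) ^ 2 - p ^ 2) / N - (1 + p / N)) ∧
    (∀ k : Fin N, ∀ x : Fin d → ℝ, x ≠ 0 → x ⬝ᵥ (A k *ᵥ x) < 0) := by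
  have hss : (s : Fin d → ℝ) ⬝ᵥ s = 1 := by
    rw [EuclideanSpace.dotProduct_self_eq_norm_sq, hs, one_pow]
  have hN : (N : ℝ) = V1.card + V2.card := by
    rw [← Nat.cast_add, ← card_union_of_disjoint hdisj, hunion, card_univ, Fintype.card_fin]
  have ha : (1 : ℝ) ≤ V1.card := Nat.one_le_cast.mpr hne1.card_pos
  have hb : (1 : ℝ) ≤ V2.card := Nat.one_le_cast.mpr hne2.card_pos
  have hm1 := dissensus_rate_pos ha hb hN hp
  -- swapping the roles of `𝒱₁` and `𝒱₂` turns `p` into `-p`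
  have hm2 : 0 < ((N : ℝ) ^ 2 - p ^ 2) / N - (1 + p / N) := by
    simpa [neg_div, sub_neg_eq_add] using
      dissensus_rate_pos (p := -p) hb ha (hN.trans (add_comm _ _)) (by rw [hp]; ring)
  have hAk : ∀ k, A k = pcaLinearization C (v k) vbar := hA
  have hA_of_eq_smul : ∀ k (ε : ℝ), ε * ε = 1 → (v k : Fin d → ℝ) = ε • s →
      A k = (1 - p / N * ε - ((N : ℝ) ^ 2 - p ^ 2) / N) • (vecMulVec s s + 1) := by
    intro k ε hε hvk
    rw [hAk k, hvk, hvbar, hC, WithLp.ofLp_smul]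
    exact pcaLinearization_smul_vecMulVec hss hε _ _
  have hA1 : ∀ i ∈ V1,
      A i = (-(((N : ℝ) ^ 2 - p ^ 2) / N - (1 - p / N))) • (vecMulVec s s + 1) := by
    intro i hi
    rw [hA_of_eq_smul i 1 (one_mul 1) (by simp [hv1 i hi])]
    congr 1; ring
  have hA2 : ∀ j ∈ V2,
      A j = (-(((N : ℝ) ^ 2 - p ^ 2) / N - (1 + p / N))) • (vecMulVec s s + 1) := by
    intro j hj
    rw [hA_of_eq_smul j (-1) (by norm_num) (by simp [hv2 j hj])]
    congr 1; ring
  refine ⟨fun i hi => ⟨hA1 i hi, hm1⟩, fun j hj => ⟨hA2 j hj, hm2⟩, fun k x hx => ?_⟩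
  rcases mem_union.mp (hunion ▸ mem_univ k : k ∈ V1 ∪ V2) with hk | hk
  · exact hA1 k hk ▸ (posDef_vecMulVec_self_add_one s).dotProduct_neg_smul_mulVec_neg hm1 hx
  · exact hA2 k hk ▸ (posDef_vecMulVec_self_add_one s).dotProduct_neg_smul_mulVec_neg hm2 hx
end

section
/- Let v₁, v₂ : ℝ → ℝ^d be differentiable at time t with ‖v₁(t)‖ = ‖v₂(t)‖ = 1, and suppose they satisfy the 2-agent PCA dynamics v̇ᵢ = (I − vᵢvᵢᵀ)Cvᵢ with C = (1/2)(v₁ − v₂)(v₁ − v₂)ᵀ. Then the inner product c(t) = ⟨v₁(t), v₂(t)⟩ satisfies ċ = −(1 + c)(1 − c)²; in particular ċ ≤ 0, with equality if and only if c = ±1. -/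
open Matrix Filter
open scoped InnerProductSpace

/-
With `w = v₁ - v₂` the matrix `C` acts as `x ↦ ½⟪w, x⟫ w`, so the Oja field at a unit vector `x`
is `½⟪w, x⟫ (w - ⟪x, w⟫ x)`. Since `⟪w, v₁⟫ = 1 - c` and `⟪w, v₂⟫ = c - 1`, each of the two terms of
`ċ = ⟪v̇₁, v₂⟫ + ⟪v₁, v̇₂⟫` equals `-½ (1 + c)(1 - c)²`. Cauchy–Schwarz gives `1 + c ≥ 0`.
-/

lemma ojaRHS_eq {d : ℕ} (M : Matrix (Fin d) (Fin d) ℝ) (x : EuclideanSpace ℝ (Fin d)) :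
    ojaRHS M x = WithLp.toLp 2 (M *ᵥ x) - ⟪x, WithLp.toLp 2 (M *ᵥ x)⟫_ℝ • x := by
  rw [ojaRHS, ← mulVec_mulVec, sub_mulVec, one_mulVec, vecMulVec_mulVec]
  ext i
  simp [EuclideanSpace.inner_eq_star_dotProduct, dotProduct_comm]

lemma toLp_smul_vecMulVec_self_mulVec {d : ℕ} (r : ℝ) (w x : EuclideanSpace ℝ (Fin d)) :
    WithLp.toLp 2 ((r • vecMulVec w w) *ᵥ x) = (r * ⟪w, x⟫_ℝ) • w := by
  rw [smul_mulVec, vecMulVec_mulVec]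
  ext i
  simp [EuclideanSpace.inner_eq_star_dotProduct, dotProduct_comm, mul_assoc]

lemma ojaRHS_smul_vecMulVec_self {d : ℕ} (r : ℝ) (w x : EuclideanSpace ℝ (Fin d)) :
    ojaRHS (r • vecMulVec w w) x = (r * ⟪w, x⟫_ℝ) • (w - ⟪x, w⟫_ℝ • x) := by
  rw [ojaRHS_eq, toLp_smul_vecMulVec_self_mulVec, inner_smul_right, smul_sub, smul_smul]

lemma inner_ojaRHS_smul_vecMulVec_sub_left {d : ℕ} (r : ℝ) {a b : EuclideanSpace ℝ (Fin d)}
    (ha : ‖a‖ = 1) (hb : ‖b‖ = 1) :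
    ⟪ojaRHS (r • vecMulVec (a - b) (a - b)) a, b⟫_ℝ
      = -r * (1 + ⟪a, b⟫_ℝ) * (1 - ⟪a, b⟫_ℝ) ^ 2 := by
  have haa : ⟪a, a⟫_ℝ = 1 := by rw [real_inner_self_eq_norm_sq, ha, one_pow]
  have hbb : ⟪b, b⟫_ℝ = 1 := by rw [real_inner_self_eq_norm_sq, hb, one_pow]
  rw [ojaRHS_smul_vecMulVec_self]
  simp only [inner_smul_left, inner_sub_left, inner_sub_right, haa, hbb,
    real_inner_comm a b, RCLike.conj_to_real]
  ring

lemma inner_ojaRHS_smul_vecMulVec_sub_right {d : ℕ} (r : ℝ) {a b : EuclideanSpace ℝ (Fin d)}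
    (ha : ‖a‖ = 1) (hb : ‖b‖ = 1) :
    ⟪a, ojaRHS (r • vecMulVec (a - b) (a - b)) b⟫_ℝ
      = -r * (1 + ⟪a, b⟫_ℝ) * (1 - ⟪a, b⟫_ℝ) ^ 2 := by
  -- `vecMulVec (a - b) (a - b) = vecMulVec (b - a) (b - a)`: the left version with `a, b` swapped.
  rw [real_inner_comm, ← neg_sub b a, WithLp.ofLp_neg, vecMulVec_neg, neg_vecMulVec, neg_neg,
    inner_ojaRHS_smul_vecMulVec_sub_left r hb ha, real_inner_comm]

theorem hasDerivAt_inner_of_hasDerivAt_ojaRHS {d : ℕ} {v1 v2 : ℝ → EuclideanSpace ℝ (Fin d)}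
    {t : ℝ}
    (hn1 : ‖v1 t‖ = 1) (hn2 : ‖v2 t‖ = 1)
    (hode1 : HasDerivAt v1
      (ojaRHS ((1 / 2 : ℝ) • vecMulVec (v1 t - v2 t) (v1 t - v2 t)) (v1 t)) t)
    (hode2 : HasDerivAt v2
      (ojaRHS ((1 / 2 : ℝ) • vecMulVec (v1 t - v2 t) (v1 t - v2 t)) (v2 t)) t) :
    HasDerivAt (fun s => ⟪v1 s, v2 s⟫_ℝ)
      (-(1 + ⟪v1 t, v2 t⟫_ℝ) * (1 - ⟪v1 t, v2 t⟫_ℝ) ^ 2) t := by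
  refine (hode1.inner ℝ hode2).congr_deriv ?_
  rw [inner_ojaRHS_smul_vecMulVec_sub_right _ hn1 hn2,
    inner_ojaRHS_smul_vecMulVec_sub_left _ hn1 hn2]
  ring

lemma neg_one_add_mul_one_sub_sq_nonpos {c : ℝ} (hc : -1 ≤ c) : -(1 + c) * (1 - c) ^ 2 ≤ 0 := by
  have : 0 ≤ (1 + c) * (1 - c) ^ 2 := mul_nonneg (by linarith) (sq_nonneg _)
  linarith

lemma neg_one_add_mul_one_sub_sq_eq_zero_iff (c : ℝ) :
    -(1 + c) * (1 - c) ^ 2 = 0 ↔ c = 1 ∨ c = -1 := by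
  rw [neg_mul, neg_eq_zero, mul_eq_zero, pow_eq_zero_iff two_ne_zero, sub_eq_zero,
    add_eq_zero_iff_eq_neg', or_comm, eq_comm (a := (1 : ℝ))]

/-- For the 2-agent PCA dynamics with `C = (1/2)(v₁-v₂)(v₁-v₂)ᵀ`, the inner
product `c = ⟨v₁, v₂⟩` satisfies `ċ = -(1+c)(1-c)² ≤ 0`, with equality iff
`c = ±1`. -/
theorem stmt14 {d : ℕ} (v1 v2 : ℝ → EuclideanSpace ℝ (Fin d)) (t : ℝ)
    (hn1 : ‖v1 t‖ = 1) (hn2 : ‖v2 t‖ = 1)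
    (C : Matrix (Fin d) (Fin d) ℝ)
    (hC : C = (1 / 2 : ℝ) • Matrix.vecMulVec (v1 t - v2 t) (v1 t - v2 t))
    (hode1 : HasDerivAt v1 (ojaRHS C (v1 t)) t)
    (hode2 : HasDerivAt v2 (ojaRHS C (v2 t)) t) :
    HasDerivAt (fun s => ⟪v1 s, v2 s⟫_ℝ)
      (-(1 + ⟪v1 t, v2 t⟫_ℝ) * (1 - ⟪v1 t, v2 t⟫_ℝ) ^ 2) t ∧
    -(1 + ⟪v1 t, v2 t⟫_ℝ) * (1 - ⟪v1 t, v2 t⟫_ℝ) ^ 2 ≤ 0 ∧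
    (-(1 + ⟪v1 t, v2 t⟫_ℝ) * (1 - ⟪v1 t, v2 t⟫_ℝ) ^ 2 = 0 ↔
      ⟪v1 t, v2 t⟫_ℝ = 1 ∨ ⟪v1 t, v2 t⟫_ℝ = -1) := by
  subst hC
  have hc : -1 ≤ ⟪v1 t, v2 t⟫_ℝ := by
    simpa [hn1, hn2] using neg_le_of_abs_le (abs_real_inner_le_norm (v1 t) (v2 t))
  exact ⟨hasDerivAt_inner_of_hasDerivAt_ojaRHS hn1 hn2 hode1 hode2,
    neg_one_add_mul_one_sub_sq_nonpos hc, neg_one_add_mul_one_sub_sq_eq_zero_iff _⟩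
end

section
/- Let v₁, v₂ : [0,∞) → ℝ^d be continuously differentiable with ‖v₁(t)‖ = ‖v₂(t)‖ = 1 for all t, satisfying the 2-agent PCA dynamics v̇ᵢ = (I − vᵢvᵢᵀ)Cvᵢ with C = (1/2)(v₁ − v₂)(v₁ − v₂)ᵀ. If ⟨v₁(0), v₂(0)⟩ < 1, then ⟨v₁(t), v₂(t)⟩ → −1 as t → ∞; equivalently ‖v₁(t) + v₂(t)‖ → 0, so the opinions converge to the antipodal (dissensus) equilibrium v₁ = −v₂, which is asymptotically stable. -/
/-! For unit vectors the flow reduces to the scalar equation `s' = -(1 - s)² (1 + s)` for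
`s = ⟪v₁, v₂⟫`. So `s` is nonincreasing, `1 - s ≥ 1 - s 0 =: δ > 0`, and `w = 1 + s ≥ 0` satisfies
`w' ≤ -δ² w`, whence `w t ≤ w 0 · exp (-δ² t)`. Finally `‖v₁ + v₂‖² = 2 (1 + s)`. -/

open Matrix Filter
open scoped InnerProductSpace

open Set Real

lemma ojaRHS_half_vecMulVec {d : ℕ} (u x : EuclideanSpace ℝ (Fin d)) :
    ojaRHS ((1 / 2 : ℝ) • vecMulVec u u) x = (⟪u, x⟫_ℝ / 2) • u - (⟪u, x⟫_ℝ ^ 2 / 2) • x := by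
  apply WithLp.ofLp_injective 2
  simp only [ojaRHS, Matrix.sub_mul, Matrix.one_mul, Matrix.sub_mulVec, ← Matrix.mulVec_mulVec,
    Matrix.smul_mulVec, vecMulVec_mulVec, Matrix.mulVec_smul, WithLp.ofLp_sub, WithLp.ofLp_smul,
    EuclideanSpace.inner_eq_star_dotProduct, star_trivial, op_smul_eq_smul, dotProduct_comm x.ofLp]
  module

lemma inner_ojaRHS_add_inner_ojaRHS {d : ℕ} {x y : EuclideanSpace ℝ (Fin d)}
    (hx : ‖x‖ = 1) (hy : ‖y‖ = 1) :
    ⟪x, ojaRHS ((1 / 2 : ℝ) • vecMulVec (x - y) (x - y)) y⟫_ℝ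
      + ⟪ojaRHS ((1 / 2 : ℝ) • vecMulVec (x - y) (x - y)) x, y⟫_ℝ
      = -(1 - ⟪x, y⟫_ℝ) ^ 2 * (1 + ⟪x, y⟫_ℝ) := by
  have hxx : ⟪x, x⟫_ℝ = 1 := by rw [real_inner_self_eq_norm_sq, hx, one_pow]
  have hyy : ⟪y, y⟫_ℝ = 1 := by rw [real_inner_self_eq_norm_sq, hy, one_pow]
  simp only [ojaRHS_half_vecMulVec, inner_sub_left, inner_sub_right, real_inner_smul_left,
    real_inner_smul_right, hxx, hyy, real_inner_comm x y]
  ring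

lemma antitoneOn_Ici_of_hasDerivAt_nonpos {f f' : ℝ → ℝ} {a : ℝ}
    (hf : ∀ t, a ≤ t → HasDerivAt f (f' t) t) (hf' : ∀ t, a ≤ t → f' t ≤ 0) :
    AntitoneOn f (Ici a) := by
  refine antitoneOn_of_hasDerivWithinAt_nonpos (f' := f') (convex_Ici a)
    (fun t ht => (hf t ht).continuousAt.continuousWithinAt) ?_ ?_ <;>
    rw [interior_Ici] <;> intro t ht
  exacts [(hf t ht.le).hasDerivWithinAt, hf' t ht.le]

lemma le_mul_exp_neg_of_hasDerivAt_le {w w' : ℝ → ℝ} {k : ℝ}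
    (hw : ∀ t, 0 ≤ t → HasDerivAt w (w' t) t) (hk : ∀ t, 0 ≤ t → w' t ≤ -k * w t)
    {t : ℝ} (ht : 0 ≤ t) : w t ≤ w 0 * exp (-k * t) := by
  have hg : AntitoneOn (fun t => w t * exp (k * t)) (Ici 0) := by
    refine antitoneOn_Ici_of_hasDerivAt_nonpos
      (fun t ht => (hw t ht).mul ((hasDerivAt_id t).const_mul k).exp) fun t ht => ?_
    calc w' t * exp (k * t) + w t * (exp (k * id t) * (k * 1))
        = (w' t + k * w t) * exp (k * t) := by simp only [id]; ring
      _ ≤ 0 := mul_nonpos_of_nonpos_of_nonneg (by linarith [hk t ht]) (exp_pos _).le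
  have hgt := hg self_mem_Ici ht ht
  simp only [mul_zero, exp_zero, mul_one] at hgt
  calc w t = w t * exp (k * t) * exp (-k * t) := by
        rw [mul_assoc, ← exp_add, neg_mul, add_neg_cancel, exp_zero, mul_one]
    _ ≤ w 0 * exp (-k * t) := mul_le_mul_of_nonneg_right hgt (exp_pos _).le

lemma tendsto_neg_one_of_hasDerivAt {s : ℝ → ℝ}
    (hs : ∀ t, 0 ≤ t → HasDerivAt s (-(1 - s t) ^ 2 * (1 + s t)) t)
    (hlb : ∀ t, 0 ≤ t → -1 ≤ s t) (h0 : s 0 < 1) : Tendsto s atTop (nhds (-1)) := by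
  have hanti : AntitoneOn s (Ici 0) := antitoneOn_Ici_of_hasDerivAt_nonpos hs fun t ht =>
    mul_nonpos_of_nonpos_of_nonneg (neg_nonpos.2 (sq_nonneg _)) (by linarith [hlb t ht])
  have hδ : 0 < 1 - s 0 := by linarith
  have hdecay : ∀ t, 0 ≤ t → 1 + s t ≤ (1 + s 0) * exp (-(1 - s 0) ^ 2 * t) := by
    refine fun t ht => le_mul_exp_neg_of_hasDerivAt_le (w := fun t => 1 + s t)
      (fun t ht => (hs t ht).const_add 1) (fun t ht => ?_) ht
    have hst : s t ≤ s 0 := hanti self_mem_Ici ht ht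
    have hsq := pow_le_pow_left₀ hδ.le (by linarith : 1 - s 0 ≤ 1 - s t) 2
    nlinarith [hlb t ht]
  have hexp : Tendsto (fun t => (1 + s 0) * exp (-(1 - s 0) ^ 2 * t)) atTop (nhds 0) := by
    simpa using (tendsto_exp_comp_nhds_zero.2
      (tendsto_id.const_mul_atTop_of_neg (neg_lt_zero.2 (pow_pos hδ 2)))).const_mul (1 + s 0)
  have hw : Tendsto (fun t => 1 + s t) atTop (nhds 0) :=
    tendsto_of_tendsto_of_tendsto_of_le_of_le' tendsto_const_nhds hexp
      (eventually_atTop.2 ⟨0, fun t ht => by linarith [hlb t ht]⟩) (eventually_atTop.2 ⟨0, hdecay⟩)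
  simpa using hw.sub_const 1

/-- For the 2-agent PCA dynamics with `C = (1/2)(v₁-v₂)(v₁-v₂)ᵀ`, if
`⟨v₁(0), v₂(0)⟩ < 1` then `⟨v₁(t), v₂(t)⟩ → -1` and `‖v₁(t) + v₂(t)‖ → 0`:
the opinions converge to the antipodal (dissensus) equilibrium `v₁ = -v₂`. -/
theorem stmt15 {d : ℕ} (v1 v2 : ℝ → EuclideanSpace ℝ (Fin d))
    (hn1 : ∀ t : ℝ, 0 ≤ t → ‖v1 t‖ = 1) (hn2 : ∀ t : ℝ, 0 ≤ t → ‖v2 t‖ = 1)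
    (C : ℝ → Matrix (Fin d) (Fin d) ℝ)
    (hC : ∀ t : ℝ, C t = (1 / 2 : ℝ) • Matrix.vecMulVec (v1 t - v2 t) (v1 t - v2 t))
    (hode1 : ∀ t : ℝ, 0 ≤ t → HasDerivAt v1 (ojaRHS (C t) (v1 t)) t)
    (hode2 : ∀ t : ℝ, 0 ≤ t → HasDerivAt v2 (ojaRHS (C t) (v2 t)) t)
    (h0 : ⟪v1 0, v2 0⟫_ℝ < 1) :
    Tendsto (fun t => ⟪v1 t, v2 t⟫_ℝ) atTop (nhds (-1)) ∧
    Tendsto (fun t => ‖v1 t + v2 t‖) atTop (nhds 0) := by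
  set s : ℝ → ℝ := fun t => ⟪v1 t, v2 t⟫_ℝ
  have hs : ∀ t, 0 ≤ t → HasDerivAt s (-(1 - s t) ^ 2 * (1 + s t)) t := fun t ht => by
    simpa only [hC, inner_ojaRHS_add_inner_ojaRHS (hn1 t ht) (hn2 t ht)]
      using (hode1 t ht).inner ℝ (hode2 t ht)
  have hlb : ∀ t, 0 ≤ t → -1 ≤ s t := fun t ht => by
    simpa [hn1 t ht, hn2 t ht] using neg_le_of_abs_le (abs_real_inner_le_norm (v1 t) (v2 t))
  have hlim : Tendsto s atTop (nhds (-1)) := tendsto_neg_one_of_hasDerivAt hs hlb h0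
  refine ⟨hlim, ?_⟩
  have hsqrt : Tendsto (fun t => √(2 * (1 + ⟪v1 t, v2 t⟫_ℝ))) atTop (nhds 0) := by
    simpa using ((hlim.const_add 1).const_mul 2).sqrt
  refine hsqrt.congr' (eventually_atTop.2 ⟨0, fun t ht => ?_⟩)
  dsimp only
  rw [← sqrt_sq (norm_nonneg (v1 t + v2 t)), norm_add_sq_real, hn1 t ht, hn2 t ht]
  ring_nf
end
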